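/- Let R be a ℤ-graded ring with non-negative part P, let A be a k×k matrix over R, let m ∈ ℤ be suitable for A, and let n > m (so n is also suitable for A). Then there is an isomorphism of R_0-modules coker μ(A,n) ≅ coker μ(A,m) ⊕ B^k, where B := {x ∈ R : the homogeneous components of x vanish in all degrees outside {−n, −n+1, …, −m−1}} (i.e. B = ⨁_{j=−n}^{−m−1} R_j), regarded as an R_0-submodule of R, and the cokernels are regarded as R_0-modules by restriction of scalars along R_0 ⊆ P. -/

import Mathlib

open DirectSum CategoryTheory
universe u
section GradedPreamble

/-- A partition of unity of type `(n, -n)` in the `ℤ`-graded ring `R`: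
a finite family `α₁, …, α_N ∈ R_n`, `β₁, …, β_N ∈ R_{-n}` with `∑ j, α j * β j = 1`. -/
def HasPartitionOfUnity {R : Type u} [Ring R] (𝒜 : ℤ → AddSubgroup R) (n : ℤ) : Prop :=
  ∃ (N : ℕ) (α β : Fin N → R),
    (∀ j, α j ∈ 𝒜 n) ∧ (∀ j, β j ∈ 𝒜 (-n)) ∧ ∑ j, α j * β j = 1
open DirectSum CategoryTheory

variable {R : Type u} [Ring R] (𝒜 : ℤ → AddSubgroup R) [GradedRing 𝒜]

noncomputable def comp' (i : ℤ) : R →+ R :=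
  ((𝒜 i).subtype).comp ((DFinsupp.evalAddMonoidHom i).comp
    (DirectSum.decomposeAddEquiv 𝒜).toAddMonoidHom)

lemma comp'_apply (i : ℤ) (x : R) : comp' 𝒜 i x = (DirectSum.decompose 𝒜 x i : R) := rfl

theorem decompose_mul_vanish {a b : R} {c d : ℤ}
    (ha : ∀ i : ℤ, i < c → (DirectSum.decompose 𝒜 a i : R) = 0)
    (hb : ∀ i : ℤ, i < d → (DirectSum.decompose 𝒜 b i : R) = 0) :
    ∀ i : ℤ, i < c + d → (DirectSum.decompose 𝒜 (a * b) i : R) = 0 := by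
  classical
  intro i hi
  have hae := (DirectSum.sum_support_decompose 𝒜 a).symm
  have hbe := (DirectSum.sum_support_decompose 𝒜 b).symm
  rw [← comp'_apply]
  conv_lhs => rw [hae, hbe]
  rw [Finset.sum_mul_sum]
  rw [map_sum]
  refine Finset.sum_eq_zero ?_
  intro j hj
  rw [map_sum]
  refine Finset.sum_eq_zero ?_
  intro k hk
  rw [comp'_apply]
  have hjc : c ≤ j := by
    by_contra h
    push_neg at h
    exact (DFinsupp.mem_support_iff.mp hj) (Subtype.ext (ha j h))
  have hkd : d ≤ k := by
    by_contra h
    push_neg at h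
    exact (DFinsupp.mem_support_iff.mp hk) (Subtype.ext (hb k h))
  have hmem : ((DirectSum.decompose 𝒜 a j : R) * (DirectSum.decompose 𝒜 b k : R)) ∈ 𝒜 (j + k) :=
    SetLike.mul_mem_graded (SetLike.coe_mem _) (SetLike.coe_mem _)
  exact DirectSum.decompose_of_mem_ne 𝒜 hmem (by omega)

/-- The degree-zero subring `R₀ = R_0` of the `ℤ`-graded ring `R`. -/
def gradeZeroSubring : Subring R where
  carrier := 𝒜 0
  zero_mem' := zero_mem _
  one_mem' := SetLike.one_mem_graded 𝒜
  add_mem' := fun ha hb => add_mem ha hb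
  neg_mem' := fun ha => neg_mem ha
  mul_mem' := fun ha hb => by simpa using SetLike.mul_mem_graded ha hb

/-- The non-negative part `P = ⨁_{k ≥ 0} R_k` of the `ℤ`-graded ring `R`:
the subring of elements whose homogeneous components in all negative degrees vanish. -/
def nonnegSubring : Subring R where
  carrier := {x | ∀ i : ℤ, i < 0 → (DirectSum.decompose 𝒜 x i : R) = 0}
  zero_mem' := by intro i hi; simp
  one_mem' := by
    intro i hi
    exact DirectSum.decompose_of_mem_ne 𝒜 (SetLike.one_mem_graded 𝒜) (by omega)
  add_mem' := by intro a b ha hb i hi; rw [DirectSum.decompose_add]; simp [ha i hi, hb i hi]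
  neg_mem' := by
    intro a ha i hi
    rw [DirectSum.decompose_neg, DFinsupp.neg_apply]
    push_cast [ha i hi]
    simp
  mul_mem' := by
    intro a b ha hb i hi
    exact decompose_mul_vanish 𝒜 ha hb i (by omega)

/-- `T_m = ⨁_{k ≥ -m} R_k`, the left `R₀`-submodule of `R` of all elements whose
homogeneous components in degrees `< -m` vanish. -/
def trunc (m : ℤ) : Submodule ↥(gradeZeroSubring 𝒜) R where
  carrier := {x | ∀ i : ℤ, i < -m → (DirectSum.decompose 𝒜 x i : R) = 0}
  zero_mem' := by intro i hi; simp
  add_mem' := by intro a b ha hb i hi; rw [DirectSum.decompose_add]; simp [ha i hi, hb i hi]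
  smul_mem' := by
    intro c x hx i hi
    have hc : ∀ i : ℤ, i < 0 → (DirectSum.decompose 𝒜 (c : R) i : R) = 0 := by
      intro i hi
      exact DirectSum.decompose_of_mem_ne 𝒜 c.2 (by omega)
    have : (c • x : R) = (c : R) * x := rfl
    rw [this]
    exact decompose_mul_vanish 𝒜 hc hx i (by omega)

lemma mem_trunc {m : ℤ} {x : R} :
    x ∈ trunc 𝒜 m ↔ ∀ i : ℤ, i < -m → (DirectSum.decompose 𝒜 x i : R) = 0 := Iff.rfl

/-- The left multiplication map `μ(A, m) : P^k → (T_m)^k`, `v ↦ v·A`, associated with a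
`k × k` matrix `A` over `R` all of whose entries have vanishing homogeneous components
in degrees `< -m`. -/
noncomputable def muMap (k : ℕ) (A : Matrix (Fin k) (Fin k) R) (m : ℤ)
    (hA : ∀ i j, A i j ∈ trunc 𝒜 m) :
    (Fin k → ↥(trunc 𝒜 0)) →ₗ[↥(gradeZeroSubring 𝒜)] (Fin k → ↥(trunc 𝒜 m)) where
  toFun v := fun j => ⟨∑ i, (v i : R) * A i j, by
    refine sum_mem ?_
    intro i _
    intro d hd
    exact decompose_mul_vanish 𝒜 (c := 0) (d := -m) (fun e he => (v i).2 e (by omega)) (hA i j) d (by omega)⟩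
  map_add' v w := by
    funext j
    apply Subtype.ext
    simp [add_mul, Finset.sum_add_distrib]
  map_smul' c v := by
    funext j
    apply Subtype.ext
    simp only [RingHom.id_apply, Pi.smul_apply]
    have hs : ∀ r : R, c • r = (c : R) * r := fun r => rfl
    simp [hs, Finset.mul_sum, mul_assoc]
end GradedPreamble

section GradedPreamble2
variable {R : Type u} [Ring R] (𝒜 : ℤ → AddSubgroup R) [GradedRing 𝒜]

theorem decompose_mul_vanish_above {a b : R} {c d : ℤ}
    (ha : ∀ i : ℤ, c < i → (DirectSum.decompose 𝒜 a i : R) = 0)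
    (hb : ∀ i : ℤ, d < i → (DirectSum.decompose 𝒜 b i : R) = 0) :
    ∀ i : ℤ, c + d < i → (DirectSum.decompose 𝒜 (a * b) i : R) = 0 := by
  classical
  intro i hi
  have hae := (DirectSum.sum_support_decompose 𝒜 a).symm
  have hbe := (DirectSum.sum_support_decompose 𝒜 b).symm
  rw [← comp'_apply]
  conv_lhs => rw [hae, hbe]
  rw [Finset.sum_mul_sum]
  rw [map_sum]
  refine Finset.sum_eq_zero ?_
  intro j hj
  rw [map_sum]
  refine Finset.sum_eq_zero ?_
  intro k hk
  rw [comp'_apply]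
  have hjc : j ≤ c := by
    by_contra h
    push_neg at h
    exact (DFinsupp.mem_support_iff.mp hj) (Subtype.ext (ha j h))
  have hkd : k ≤ d := by
    by_contra h
    push_neg at h
    exact (DFinsupp.mem_support_iff.mp hk) (Subtype.ext (hb k h))
  have hmem : ((DirectSum.decompose 𝒜 a j : R) * (DirectSum.decompose 𝒜 b k : R)) ∈ 𝒜 (j + k) :=
    SetLike.mul_mem_graded (SetLike.coe_mem _) (SetLike.coe_mem _)
  exact DirectSum.decompose_of_mem_ne 𝒜 hmem (by omega)

/-- `B = ⨁_{j = -n}^{-m-1} R_j`: the `R₀`-submodule of `R` of elements whose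
homogeneous components vanish in all degrees outside `{-n, …, -m-1}`. -/
def degreeWindow (n m : ℤ) : Submodule ↥(gradeZeroSubring 𝒜) R where
  carrier := {x | ∀ i : ℤ, (i < -n ∨ -m - 1 < i) → (DirectSum.decompose 𝒜 x i : R) = 0}
  zero_mem' := by intro i _; simp
  add_mem' := by intro a b ha hb i hi; rw [DirectSum.decompose_add]; simp [ha i hi, hb i hi]
  smul_mem' := by
    intro c x hx i hi
    have hs : (c • x : R) = (c : R) * x := rfl
    have hc0 : ∀ i : ℤ, i < 0 → (DirectSum.decompose 𝒜 (c : R) i : R) = 0 := fun i hi =>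
      DirectSum.decompose_of_mem_ne 𝒜 c.2 (by omega)
    have hc0' : ∀ i : ℤ, 0 < i → (DirectSum.decompose 𝒜 (c : R) i : R) = 0 := fun i hi =>
      DirectSum.decompose_of_mem_ne 𝒜 c.2 (by omega)
    rw [hs]
    rcases hi with hi | hi
    · exact decompose_mul_vanish 𝒜 (c := 0) (d := -n) hc0
        (fun e he => hx e (Or.inl he)) i (by omega)
    · exact decompose_mul_vanish_above 𝒜 (c := 0) (d := -m - 1) hc0'
        (fun e he => hx e (Or.inr he)) i (by omega)

end GradedPreamble2

/-! Splitting off the homogeneous components in degrees `-n, …, -m-1` is an `R₀`-linear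
decomposition `T_n ≅ T_m ⊕ B`. The entries of `v·A` already lie in `T_m`, so under this
decomposition `μ(A,n)` becomes `μ(A,m)` followed by the inclusion of the first summand, and its
cokernel is `coker μ(A,m) ⊕ B^k`. -/

section QuotientRange

variable {S L M N₁ N₂ : Type*} [Ring S] [AddCommGroup L] [AddCommGroup M] [AddCommGroup N₁]
  [AddCommGroup N₂] [Module S L] [Module S M] [Module S N₁] [Module S N₂]

noncomputable def LinearMap.quotRangeEquivProdOfComp (f : L →ₗ[S] N₁) (g : L →ₗ[S] M)
    (e : M ≃ₗ[S] N₁ × N₂) (h : e.toLinearMap ∘ₗ g = LinearMap.inl S N₁ N₂ ∘ₗ f) :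
    (M ⧸ LinearMap.range g) ≃ₗ[S] (N₁ ⧸ LinearMap.range f) × N₂ :=
  let φ := ((LinearMap.range f).mkQ.prodMap LinearMap.id) ∘ₗ e.toLinearMap
  have hφ : Function.Surjective φ :=
    ((Submodule.mkQ_surjective _).prodMap Function.surjective_id).comp e.surjective
  have hker : LinearMap.range g = LinearMap.ker φ := by
    ext x
    have hx : x ∈ LinearMap.range g ↔ e x ∈ LinearMap.range (LinearMap.inl S N₁ N₂ ∘ₗ f) := by
      rw [← h, LinearMap.range_comp, Submodule.mem_map_equiv, LinearEquiv.symm_apply_apply]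
    rw [hx, LinearMap.range_comp, Submodule.map_inl, LinearMap.mem_ker]
    simp [φ, Prod.ext_iff, Submodule.Quotient.mk_eq_zero]
  (Submodule.quotEquivOfEq _ _ hker).trans (φ.quotKerEquivOfSurjective hφ)

end QuotientRange

section DegreeWindow

variable {R : Type u} [Ring R] (𝒜 : ℤ → AddSubgroup R) [GradedRing 𝒜]

theorem eq_of_coe_decompose_eq {x y : R}
    (h : ∀ i, (DirectSum.decompose 𝒜 x i : R) = DirectSum.decompose 𝒜 y i) : x = y :=
  (DirectSum.decompose 𝒜).injective (DFinsupp.ext fun i => Subtype.ext (h i))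

noncomputable def gradeProj (i : ℤ) : R →ₗ[gradeZeroSubring 𝒜] R where
  toFun := GradedRing.proj 𝒜 i
  map_add' := map_add _
  map_smul' c _ := DirectSum.coe_decompose_mul_of_left_mem_zero 𝒜 c.2

theorem gradeProj_apply (i : ℤ) (x : R) :
    gradeProj 𝒜 i x = (DirectSum.decompose 𝒜 x i : R) := rfl

noncomputable def windowPart (n m : ℤ) : R →ₗ[gradeZeroSubring 𝒜] R :=
  ∑ i ∈ Finset.Icc (-n) (-m - 1), gradeProj 𝒜 i

variable {𝒜}

theorem coe_decompose_windowPart (n m : ℤ) (x : R) (j : ℤ) :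
    (DirectSum.decompose 𝒜 (windowPart 𝒜 n m x) j : R)
      = if j ∈ Finset.Icc (-n) (-m - 1) then (DirectSum.decompose 𝒜 x j : R) else 0 := by
  classical
  have hproj : ∀ i, (DirectSum.decompose 𝒜 (DirectSum.decompose 𝒜 x i : R) j : R) =
      if i = j then (DirectSum.decompose 𝒜 x j : R) else 0 := by
    intro i
    split_ifs with h
    · subst h; exact DirectSum.decompose_of_mem_same 𝒜 (SetLike.coe_mem _)
    · exact DirectSum.decompose_of_mem_ne 𝒜 (SetLike.coe_mem _) h
  simp only [windowPart, LinearMap.sum_apply, gradeProj_apply,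
    DirectSum.decompose_sum, DirectSum.sum_apply, AddSubgroup.val_finsetSum, hproj,
    Finset.sum_ite_eq']

theorem windowPart_mem_degreeWindow (n m : ℤ) (x : R) :
    windowPart 𝒜 n m x ∈ degreeWindow 𝒜 n m := by
  intro j hj
  rw [coe_decompose_windowPart, if_neg]
  simp only [Finset.mem_Icc]
  omega

theorem sub_windowPart_mem_trunc {n : ℤ} (m : ℤ) {x : R} (hx : x ∈ trunc 𝒜 n) :
    x - windowPart 𝒜 n m x ∈ trunc 𝒜 m := by
  intro j hj
  rw [DirectSum.decompose_sub, DirectSum.sub_apply, AddSubgroupClass.coe_sub,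
    coe_decompose_windowPart]
  split_ifs with h
  · exact sub_self _
  · rw [hx j (by simp only [Finset.mem_Icc] at h; omega), sub_zero]

theorem windowPart_eq_zero_of_mem_trunc (n : ℤ) {m : ℤ} {x : R} (hx : x ∈ trunc 𝒜 m) :
    windowPart 𝒜 n m x = 0 :=
  eq_of_coe_decompose_eq 𝒜 fun j => by
    rw [coe_decompose_windowPart, DirectSum.decompose_zero, DirectSum.zero_apply,
      ZeroMemClass.coe_zero, ite_eq_right_iff, Finset.mem_Icc]
    exact fun hj => hx j (by omega)

theorem windowPart_eq_self_of_mem_degreeWindow {n m : ℤ} {x : R}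
    (hx : x ∈ degreeWindow 𝒜 n m) : windowPart 𝒜 n m x = x :=
  eq_of_coe_decompose_eq 𝒜 fun j => by
    rw [coe_decompose_windowPart, ite_eq_left_iff, Finset.mem_Icc]
    exact fun hj => (hx j (by omega)).symm

theorem trunc_mono {m n : ℤ} (h : m ≤ n) : trunc 𝒜 m ≤ trunc 𝒜 n :=
  fun _ hx i hi => hx i (by omega)

theorem degreeWindow_le_trunc (n m : ℤ) : degreeWindow 𝒜 n m ≤ trunc 𝒜 n :=
  fun _ hx i hi => hx i (Or.inl hi)

variable (𝒜)

noncomputable def truncEquivProdDegreeWindow {m n : ℤ} (h : m ≤ n) :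
    trunc 𝒜 n ≃ₗ[gradeZeroSubring 𝒜] trunc 𝒜 m × degreeWindow 𝒜 n m where
  toFun x := (⟨(x : R) - windowPart 𝒜 n m (x : R), sub_windowPart_mem_trunc m x.2⟩,
    ⟨windowPart 𝒜 n m (x : R), windowPart_mem_degreeWindow n m (x : R)⟩)
  invFun p := ⟨(p.1 : R) + p.2, add_mem (trunc_mono h p.1.2) (degreeWindow_le_trunc n m p.2.2)⟩
  map_add' x y := by
    ext
    · simp only [Submodule.coe_add, map_add, Prod.fst_add]
      abel
    · simp
  map_smul' c x := by ext <;> simp [smul_sub]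
  left_inv x := by ext; simp
  right_inv p := by
    ext <;> simp [windowPart_eq_zero_of_mem_trunc n p.1.2,
      windowPart_eq_self_of_mem_degreeWindow p.2.2]

theorem truncEquivProdDegreeWindow_apply_of_mem {m n : ℤ} (h : m ≤ n) {x : trunc 𝒜 n}
    (hx : (x : R) ∈ trunc 𝒜 m) : truncEquivProdDegreeWindow 𝒜 h x = (⟨x, hx⟩, 0) :=
  have hw : windowPart 𝒜 n m x = 0 := windowPart_eq_zero_of_mem_trunc n hx
  Prod.ext (Subtype.ext <| (congrArg _ hw).trans (sub_zero _)) (Subtype.ext hw)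

noncomputable def truncPiEquivProdDegreeWindowPi (ι : Type*) {m n : ℤ} (h : m ≤ n) :
    (ι → trunc 𝒜 n) ≃ₗ[gradeZeroSubring 𝒜] (ι → trunc 𝒜 m) × (ι → degreeWindow 𝒜 n m) :=
  (LinearEquiv.piCongrRight fun _ => truncEquivProdDegreeWindow 𝒜 h).trans
    ((Equiv.arrowProdEquivProdArrow ι _ _).toLinearEquiv ⟨fun _ _ => rfl, fun _ _ => rfl⟩)

theorem truncPiEquivProdDegreeWindowPi_comp_muMap (k : ℕ) (A : Matrix (Fin k) (Fin k) R)
    {m n : ℤ} (h : m ≤ n) (hA : ∀ i j, A i j ∈ trunc 𝒜 m) :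
    (truncPiEquivProdDegreeWindowPi 𝒜 (Fin k) h).toLinearMap ∘ₗ
        muMap 𝒜 k A n (fun i j => trunc_mono h (hA i j)) =
      LinearMap.inl _ _ _ ∘ₗ muMap 𝒜 k A m hA :=
  have hsplit v j := truncEquivProdDegreeWindow_apply_of_mem 𝒜 h (muMap 𝒜 k A m hA v j).2
  LinearMap.ext fun v => Prod.ext (funext fun j => congrArg Prod.fst (hsplit v j))
    (funext fun j => congrArg Prod.snd (hsplit v j))

end DegreeWindow

/-- **Lemma.**  Let `R` be a `ℤ`-graded ring, `A` a `k × k` matrix over `R`, `m`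
suitable for `A`, and `n > m`.  Then there is an isomorphism of `R₀`-modules
`coker μ(A,n) ≅ coker μ(A,m) ⊕ B^k`, where `B = ⨁_{j=-n}^{-m-1} R_j`. -/
theorem coker_muMap_succ {R : Type u} [Ring R]
    (𝒜 : ℤ → AddSubgroup R) [GradedRing 𝒜]
    (k : ℕ) (A : Matrix (Fin k) (Fin k) R) (m n : ℤ) (hmn : m < n)
    (hA : ∀ i j, A i j ∈ trunc 𝒜 m) :
    Nonempty
      ((((Fin k → ↥(trunc 𝒜 n)) ⧸
          LinearMap.range (muMap 𝒜 k A n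
            (fun i j e he => hA i j e (by omega)))) ≃ₗ[↥(gradeZeroSubring 𝒜)]
        ((Fin k → ↥(trunc 𝒜 m)) ⧸ LinearMap.range (muMap 𝒜 k A m hA)) ×
          (Fin k → ↥(degreeWindow 𝒜 n m)))) :=
  ⟨LinearMap.quotRangeEquivProdOfComp _ _ _
    (truncPiEquivProdDegreeWindowPi_comp_muMap 𝒜 k A hmn.le hA)⟩
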